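/- Let Δ = Γ_1 #_σ Γ_2 be the connected sum of two simplicial 2-spheres along a common facet σ, let Θ = θ_1,θ_2,θ_3 be a common linear system of parameters for F[Δ] and F[⟨σ⟩], and let ω be a linear form. If (F[Γ_i]/(Θ,ω))_2 = 0 for i = 1, 2, then (F[Δ]/(Θ,ω))_2 = 0. -/

import Mathlib

open MvPolynomial

/-- An (abstract) simplicial complex on the vertex set `V`: a collection of finite
subsets of `V` closed under taking subsets. -/
def IsSimpComplex {V : Type*} (Δ : Set (Finset V)) : Prop :=
  ∀ σ ∈ Δ, ∀ τ, τ ⊆ σ → τ ∈ Δ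

/-- The Stanley–Reisner ideal of `Δ`: generated by the squarefree monomials
corresponding to the nonempty non-faces of `Δ`. -/
noncomputable def stanleyReisnerIdeal (F : Type*) [Field F] {V : Type*}
    (Δ : Set (Finset V)) : Ideal (MvPolynomial V F) :=
  Ideal.span {m | ∃ σ : Finset V, σ.Nonempty ∧ σ ∉ Δ ∧ m = ∏ v ∈ σ, X v}

/-- `θ₁, …, θ_d` is a linear system of parameters for the Stanley–Reisner ring
`F[Δ]`: each `θᵢ` is a linear form and the quotient of `F[Δ]` by them is a
finite-dimensional F-vector space. -/
def IsLSOP (F : Type*) [Field F] {V : Type*} (Δ : Set (Finset V)) {d : ℕ}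
    (θ : Fin d → MvPolynomial V F) : Prop :=
  (∀ i, θ i ∈ homogeneousSubmodule V F 1) ∧
  FiniteDimensional F
    (MvPolynomial V F ⧸ (stanleyReisnerIdeal F Δ ⊔ Ideal.span (Set.range θ)))

/-- The geometric realization of `Δ`, as a subspace of `V → ℝ`. -/
def geomRealization {V : Type*} (Δ : Set (Finset V)) : Set (V → ℝ) :=
  {f | (∀ v, 0 ≤ f v) ∧ ∃ σ ∈ Δ, (∀ v, f v ≠ 0 → v ∈ σ) ∧ ∑ v ∈ σ, f v = 1}

/-- A simplicial 2-sphere: a simplicial complex whose geometric realization is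
homeomorphic to the 2-dimensional unit sphere. -/
def IsSimplicial2Sphere {V : Type*} (Δ : Set (Finset V)) : Prop :=
  IsSimpComplex Δ ∧
  Nonempty (geomRealization Δ ≃ₜ Metric.sphere (0 : EuclideanSpace ℝ (Fin 3)) 1)

/-!
Write `Iᵢ`, `I_σ`, `I_Δ` for the Stanley–Reisner ideals, `K = (Θ, ω)` and `𝔪 = (X_v)`.
Since `I_σ = I₁ + I₂` and `I₁ ∩ I₂ = I_{Γ₁ ∪ Γ₂} ⊆ I_Δ`, and a quadratic form in `Iᵢ + K` lies in
`Iᵢ + K𝔪` (K is generated by linear forms), it suffices to show `I_σ ∩ K𝔪 ⊆ I_σ K`: if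
`p = a₁ + k₁ = a₂ + k₂` then `a₁ - a₂ = e₁ + e₂` with `eᵢ ∈ IᵢK`, and
`p = (a₁ - e₁) + (e₁ + k₁)` with `a₁ - e₁ = a₂ + e₂ ∈ I₁ ∩ I₂`.

As `Θ` is an l.s.o.p. for the simplex, every variable is congruent modulo `I_σ` to an element
of `(Θ)`. Substituting these gives an algebra endomorphism `P` that kills `I_σ`, is the identity
modulo `I_σ`, and maps `𝔪` into `(Θ)`. For `x ∈ I_σ ∩ K𝔪` we then have `x = x - P x`, and
`km - P(k) P(m) = k (m - P m) + (k - P k) P(m) ∈ I_σ K`.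
-/

namespace Ideal

variable {R : Type*} [CommRing R]

theorem inf_mul_le_mul_of_retraction {G : Type*} [FunLike G R R] [RingHomClass G R R]
    {I K M : Ideal R} (P : G) (hPI : I ≤ RingHom.ker P)
    (hP : ∀ x, P x - x ∈ I) (hPM : M.map P ≤ K) : I ⊓ (K * M) ≤ I * K := by
  have key : ∀ y ∈ K * M, y - P y ∈ I * K := by
    intro y hy
    refine Submodule.mul_induction_on hy (fun k hk m hm => ?_) fun y z hy hz => ?_
    · have hm' : m - P m ∈ I := by simpa using I.neg_mem (hP m)
      have hk' : k - P k ∈ I := by simpa using I.neg_mem (hP k)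
      rw [map_mul, show k * m - P k * P m = (m - P m) * k + (k - P k) * P m by ring]
      exact add_mem (mul_mem_mul hm' hk) (mul_mem_mul hk' (hPM (mem_map_of_mem P hm)))
    · rw [map_add, add_sub_add_comm]
      exact add_mem hy hz
  intro x ⟨hxI, hxKM⟩
  simpa [RingHom.mem_ker.mp (hPI hxI)] using key x hxKM

theorem sup_inf_sup_le_of_inf_le_mul {I₁ I₂ K N : Ideal R} (hNK : N ≤ K)
    (h : (I₁ ⊔ I₂) ⊓ N ≤ (I₁ ⊔ I₂) * K) : (I₁ ⊔ N) ⊓ (I₂ ⊔ N) ≤ I₁ ⊓ I₂ ⊔ K := by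
  rintro p ⟨hp₁, hp₂⟩
  obtain ⟨a₁, ha₁, n₁, hn₁, rfl⟩ := Submodule.mem_sup.mp hp₁
  obtain ⟨a₂, ha₂, n₂, hn₂, hp⟩ := Submodule.mem_sup.mp hp₂
  have hc : a₁ - a₂ ∈ (I₁ ⊔ I₂) ⊓ N := by
    refine ⟨sub_mem (mem_sup_left ha₁) (mem_sup_right ha₂), ?_⟩
    rw [show a₁ - a₂ = n₂ - n₁ by linear_combination -hp]
    exact sub_mem hn₂ hn₁
  obtain ⟨e, he, f, hf, hef⟩ := Submodule.mem_sup.mp (sup_mul I₁ I₂ K ▸ h hc)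
  rw [show a₁ + n₁ = (a₁ - e) + (e + n₁) by ring]
  refine Submodule.add_mem_sup ⟨sub_mem ha₁ (mul_le_left he), ?_⟩
    (add_mem (mul_le_right he) (hNK hn₁))
  rw [show a₁ - e = a₂ + f by linear_combination -hef]
  exact add_mem ha₂ (mul_le_left hf)

end Ideal

section Graded

variable {A σ : Type*} [CommSemiring A] [SetLike σ A] [AddSubmonoidClass σ A] (𝒜 : ℕ → σ)
  [GradedRing 𝒜] {s : Set A} {M : Ideal A} {n : ℕ}

theorem DirectSum.decompose_succ_mem_span_mul (hs : s ⊆ 𝒜 1) (hM : ∀ a ∈ 𝒜 n, a ∈ M) {x : A}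
    (hx : x ∈ Ideal.span s) : (DirectSum.decompose 𝒜 x (n + 1) : A) ∈ Ideal.span s * M := by
  obtain ⟨k, c, g, rfl⟩ := Submodule.mem_span_set'.mp hx
  rw [DirectSum.decompose_sum, DFinsupp.finsetSum_apply, AddSubmonoidClass.coe_finsetSum]
  refine Ideal.sum_mem _ fun i _ => ?_
  rw [smul_eq_mul, DirectSum.coe_decompose_mul_add_of_right_mem 𝒜 (hs (g i).2)]
  exact Ideal.mul_mem_mul_rev (Ideal.subset_span (g i).2) (hM _ (SetLike.coe_mem _))

theorem Ideal.IsHomogeneous.mem_sup_span_mul_of_mem_sup {I : Ideal A} (hI : I.IsHomogeneous 𝒜)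
    (hs : s ⊆ 𝒜 1) (hM : ∀ a ∈ 𝒜 n, a ∈ M) {p : A} (hp : p ∈ 𝒜 (n + 1))
    (h : p ∈ I ⊔ Ideal.span s) : p ∈ I ⊔ Ideal.span s * M := by
  obtain ⟨a, ha, k, hk, rfl⟩ := Submodule.mem_sup.mp h
  rw [← DirectSum.decompose_of_mem_same 𝒜 hp, DirectSum.decompose_add, DirectSum.add_apply,
    AddMemClass.coe_add]
  exact Submodule.add_mem_sup (hI (n + 1) ha) (DirectSum.decompose_succ_mem_span_mul 𝒜 hs hM hk)

end Graded

theorem Finsupp.sum_single_one_le_iff {V : Type*} {τ : Finset V} {m : V →₀ ℕ} :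
    ∑ v ∈ τ, Finsupp.single v 1 ≤ m ↔ τ ⊆ m.support := by
  classical
  simp only [Finsupp.le_def, Finsupp.coe_finsetSum, Finset.sum_apply, Finsupp.single_apply,
    Finset.sum_ite_eq', Finset.subset_iff, Finsupp.mem_support_iff]
  refine ⟨fun h v hv => ?_, fun h v => ?_⟩
  · simpa [hv, Nat.one_le_iff_ne_zero] using h v
  · split_ifs with hv
    · exact Nat.one_le_iff_ne_zero.mpr (h hv)
    · exact Nat.zero_le _

theorem MvPolynomial.mem_span_X_of_mem_homogeneousSubmodule_one {V R : Type*} [CommSemiring R]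
    {ℓ : MvPolynomial V R} (hℓ : ℓ ∈ homogeneousSubmodule V R 1) :
    ℓ ∈ Ideal.span (Set.range X) := by
  rw [homogeneousSubmodule_one_eq_span_X] at hℓ
  exact Submodule.span_le_restrictScalars R _ _ hℓ

attribute [local instance] MvPolynomial.gradedAlgebra

section StanleyReisner

variable {F V : Type*} [Field F]

theorem stanleyReisnerIdeal_anti : Antitone (stanleyReisnerIdeal F : Set (Finset V) → _) :=
  fun _ _ hΓ => Ideal.span_mono fun _ ⟨τ, hne, hτ, hm⟩ => ⟨τ, hne, fun h => hτ (hΓ h), hm⟩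

theorem stanleyReisnerIdeal_inter (Γ₁ Γ₂ : Set (Finset V)) :
    stanleyReisnerIdeal F (Γ₁ ∩ Γ₂) = stanleyReisnerIdeal F Γ₁ ⊔ stanleyReisnerIdeal F Γ₂ := by
  refine le_antisymm (Ideal.span_le.mpr ?_)
    (sup_le (stanleyReisnerIdeal_anti Set.inter_subset_left)
      (stanleyReisnerIdeal_anti Set.inter_subset_right))
  rintro _ ⟨τ, hne, hτ, rfl⟩
  by_cases h₁ : τ ∈ Γ₁
  · exact Ideal.mem_sup_right (Ideal.subset_span ⟨τ, hne, fun h₂ => hτ ⟨h₁, h₂⟩, rfl⟩)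
  · exact Ideal.mem_sup_left (Ideal.subset_span ⟨τ, hne, h₁, rfl⟩)

theorem mem_stanleyReisnerIdeal_iff {Γ : Set (Finset V)} {x : MvPolynomial V F} :
    x ∈ stanleyReisnerIdeal F Γ ↔
      ∀ m ∈ x.support, ∃ τ : Finset V, τ.Nonempty ∧ τ ∉ Γ ∧ τ ⊆ m.support := by
  have hgen : {m | ∃ τ : Finset V, τ.Nonempty ∧ τ ∉ Γ ∧ m = ∏ v ∈ τ, (X v : MvPolynomial V F)} =
      (fun s => monomial s (1 : F)) ''
        ((fun τ : Finset V => ∑ v ∈ τ, Finsupp.single v 1) '' {τ | τ.Nonempty ∧ τ ∉ Γ}) := by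
    ext m
    simp [monomial_sum_one, X, eq_comm, and_assoc]
  rw [stanleyReisnerIdeal, hgen, mem_ideal_span_monomial_image]
  simp [Finsupp.sum_single_one_le_iff, and_assoc]

theorem stanleyReisnerIdeal_union {Γ₁ Γ₂ : Set (Finset V)} (h₁ : IsSimpComplex Γ₁)
    (h₂ : IsSimpComplex Γ₂) :
    stanleyReisnerIdeal F (Γ₁ ∪ Γ₂) = stanleyReisnerIdeal F Γ₁ ⊓ stanleyReisnerIdeal F Γ₂ := by
  refine le_antisymm (le_inf (stanleyReisnerIdeal_anti Set.subset_union_left)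
    (stanleyReisnerIdeal_anti Set.subset_union_right)) fun x hx => ?_
  obtain ⟨hx₁, hx₂⟩ := Submodule.mem_inf.mp hx
  rw [mem_stanleyReisnerIdeal_iff] at hx₁ hx₂ ⊢
  intro m hm
  obtain ⟨τ₁, hne, hτ₁, hsub₁⟩ := hx₁ m hm
  obtain ⟨τ₂, -, hτ₂, hsub₂⟩ := hx₂ m hm
  classical
  refine ⟨τ₁ ∪ τ₂, hne.mono Finset.subset_union_left, ?_, Finset.union_subset hsub₁ hsub₂⟩
  rintro (h | h)
  exacts [hτ₁ (h₁ _ h _ Finset.subset_union_left), hτ₂ (h₂ _ h _ Finset.subset_union_right)]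

theorem stanleyReisnerIdeal_isHomogeneous (Γ : Set (Finset V)) :
    (stanleyReisnerIdeal F Γ).IsHomogeneous (homogeneousSubmodule V F) := by
  refine Ideal.homogeneous_span _ _ ?_
  rintro _ ⟨τ, -, -, rfl⟩
  exact ⟨τ.card, by simpa using IsHomogeneous.prod τ _ (fun _ => 1) fun v _ => isHomogeneous_X F v⟩

theorem X_mem_stanleyReisnerIdeal {Γ : Set (Finset V)} {v : V} (hv : {v} ∉ Γ) :
    X v ∈ stanleyReisnerIdeal F Γ :=
  Ideal.subset_span ⟨{v}, Finset.singleton_nonempty v, hv, (Finset.prod_singleton _ _).symm⟩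

section Simplex

variable (σ : Finset V)

theorem X_mem_stanleyReisnerIdeal_simplex {v : V} (hv : v ∉ σ) :
    X v ∈ stanleyReisnerIdeal F {τ | τ ⊆ σ} :=
  X_mem_stanleyReisnerIdeal (by simpa using hv)

theorem stanleyReisnerIdeal_simplex_le_ker {S G : Type*} [CommSemiring S]
    [FunLike G (MvPolynomial V F) S] [RingHomClass G (MvPolynomial V F) S] (g : G)
    (hg : ∀ w ∉ σ, g (X w) = 0) : stanleyReisnerIdeal F {τ | τ ⊆ σ} ≤ RingHom.ker g := by
  refine Ideal.span_le.mpr ?_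
  rintro _ ⟨τ, -, hτ, rfl⟩
  obtain ⟨w, hwτ, hwσ⟩ := Finset.not_subset.mp hτ
  rw [SetLike.mem_coe, RingHom.mem_ker, map_prod]
  exact Finset.prod_eq_zero hwτ (hg w hwσ)

theorem X_mem_sup_of_isLSOP_simplex {d : ℕ} {θ : Fin d → MvPolynomial V F}
    (hθ : IsLSOP F {τ | τ ⊆ σ} θ) (v : V) :
    X v ∈ stanleyReisnerIdeal F {τ | τ ⊆ σ} ⊔ Ideal.span (Set.range θ) := by
  set L := stanleyReisnerIdeal F {τ | τ ⊆ σ} ⊔ Ideal.span (Set.range θ)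
  by_contra hv
  obtain ⟨f, hfv, hfL⟩ :=
    Submodule.exists_dual_map_eq_bot_of_notMem (p := L.restrictScalars F) hv inferInstance
  have hf : ∀ x ∈ L, f x = 0 := fun x hx =>
    (Submodule.mem_bot F).mp (hfL ▸ Submodule.mem_map_of_mem (p := L.restrictScalars F) hx)
  -- `ψ` restricts to the line through the point `(f (X w))_w`: it kills `L`, yet is onto `F[t]`.
  let ψ : MvPolynomial V F →ₐ[F] Polynomial F :=
    aeval fun w => Polynomial.C (f (X w)) * Polynomial.X
  have hψ_linear : ∀ ℓ ∈ homogeneousSubmodule V F 1, ψ ℓ = Polynomial.C (f ℓ) * Polynomial.X := by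
    intro ℓ hℓ
    rw [homogeneousSubmodule_one_eq_span_X] at hℓ
    induction hℓ using Submodule.span_induction with
    | mem _ h => obtain ⟨w, rfl⟩ := h; exact aeval_X _ _
    | zero => simp
    | add x y _ _ hx hy => simp [hx, hy, add_mul]
    | smul a x _ hx => simp [hx, Polynomial.smul_eq_C_mul, mul_assoc]
  have hψL : L ≤ RingHom.ker ψ := by
    refine sup_le ?_ (Ideal.span_le.mpr ?_)
    · refine stanleyReisnerIdeal_simplex_le_ker σ ψ fun w hw => ?_
      rw [aeval_X, hf _ (Ideal.mem_sup_left (X_mem_stanleyReisnerIdeal_simplex σ hw)),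
        map_zero, zero_mul]
    · rintro _ ⟨i, rfl⟩
      rw [SetLike.mem_coe, RingHom.mem_ker, hψ_linear _ (hθ.1 i),
        hf _ (Ideal.mem_sup_right (Ideal.subset_span ⟨i, rfl⟩)), map_zero, zero_mul]
  let ψL := Ideal.Quotient.liftₐ L ψ fun x hx => hψL hx
  have hψL_surj : Function.Surjective ψL := by
    have hX : ψ (C (f (X v))⁻¹ * X v) = Polynomial.X := by
      simp [ψ, ← mul_assoc, ← Polynomial.C_mul, inv_mul_cancel₀ hfv]
    intro q
    refine ⟨Ideal.Quotient.mk L (Polynomial.aeval (C (f (X v))⁻¹ * X v) q), ?_⟩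
    change ψ (Polynomial.aeval _ q) = q
    rw [← Polynomial.aeval_algHom_apply, hX, Polynomial.aeval_X_left_apply]
  have := hθ.2
  exact Polynomial.not_finite (Module.Finite.of_surjective ψL.toLinearMap hψL_surj)

theorem exists_retraction_of_X_mem_sup {L : Ideal (MvPolynomial V F)}
    (hX : ∀ v ∈ σ, X v ∈ stanleyReisnerIdeal F {τ | τ ⊆ σ} ⊔ L) :
    ∃ P : MvPolynomial V F →ₐ[F] MvPolynomial V F,
      stanleyReisnerIdeal F {τ | τ ⊆ σ} ≤ RingHom.ker P ∧
      (∀ x, P x - x ∈ stanleyReisnerIdeal F {τ | τ ⊆ σ}) ∧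
      (Ideal.span (Set.range X)).map P ≤ L := by
  classical
  choose! a ha b hb hab using fun v hv => Submodule.mem_sup.mp (hX v hv)
  let P : MvPolynomial V F →ₐ[F] MvPolynomial V F := aeval fun v => if v ∈ σ then b v else 0
  have hPX : ∀ v, P (X v) = if v ∈ σ then b v else 0 := fun v => aeval_X _ v
  refine ⟨P, stanleyReisnerIdeal_simplex_le_ker σ P fun w hw => by rw [hPX, if_neg hw],
    fun x => ?_, ?_⟩
  · suffices (Ideal.Quotient.mkₐ F _).comp P = Ideal.Quotient.mkₐ F _ from
      Ideal.Quotient.eq.mp (AlgHom.congr_fun this x)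
    refine MvPolynomial.algHom_ext fun v => Ideal.Quotient.eq.mpr ?_
    change P (X v) - X v ∈ _
    rw [hPX]
    split_ifs with hv
    · rw [← hab v hv, sub_add_cancel_right]
      exact neg_mem (ha v hv)
    · rw [zero_sub]
      exact neg_mem (X_mem_stanleyReisnerIdeal_simplex σ hv)
  · rw [Ideal.map_span, Ideal.span_le]
    rintro _ ⟨_, ⟨v, rfl⟩, rfl⟩
    rw [SetLike.mem_coe, hPX]
    split_ifs with hv
    exacts [hb v hv, L.zero_mem]

end Simplex

end StanleyReisner

theorem stmt19_general {V F : Type*} [Field F]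
    (Γ₁ Γ₂ : Set (Finset V))
    (h₁ : IsSimplicial2Sphere Γ₁) (h₂ : IsSimplicial2Sphere Γ₂)
    (σ : Finset V)
    (hint : Γ₁ ∩ Γ₂ = {τ | τ ⊆ σ})
    (Δ : Set (Finset V)) (hΔ : Δ = (Γ₁ \ {σ}) ∪ (Γ₂ \ {σ}))
    (θ : Fin 3 → MvPolynomial V F)
    (hlsopΔ : IsLSOP F Δ θ) (hlsopσ : IsLSOP F {τ : Finset V | τ ⊆ σ} θ)
    (ω : MvPolynomial V F) (hω : ω ∈ homogeneousSubmodule V F 1)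
    (hvan₁ : ∀ p ∈ homogeneousSubmodule V F 2,
      p ∈ stanleyReisnerIdeal F Γ₁ ⊔ (Ideal.span (Set.range θ) ⊔ Ideal.span {ω}))
    (hvan₂ : ∀ p ∈ homogeneousSubmodule V F 2,
      p ∈ stanleyReisnerIdeal F Γ₂ ⊔ (Ideal.span (Set.range θ) ⊔ Ideal.span {ω})) :
    ∀ p ∈ homogeneousSubmodule V F 2,
      p ∈ stanleyReisnerIdeal F Δ ⊔ (Ideal.span (Set.range θ) ⊔ Ideal.span {ω}) := by
  intro p hp
  set K := Ideal.span (Set.range θ) ⊔ Ideal.span {ω}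
  set 𝔪 : Ideal (MvPolynomial V F) := Ideal.span (Set.range X)
  obtain ⟨P, hPker, hPsub, hPmap⟩ := exists_retraction_of_X_mem_sup σ fun v _ =>
    X_mem_sup_of_isLSOP_simplex σ hlsopσ v
  have hσ : (stanleyReisnerIdeal F Γ₁ ⊔ stanleyReisnerIdeal F Γ₂) ⊓ (K * 𝔪) ≤
      (stanleyReisnerIdeal F Γ₁ ⊔ stanleyReisnerIdeal F Γ₂) * K := by
    rw [← stanleyReisnerIdeal_inter, hint]
    exact Ideal.inf_mul_le_mul_of_retraction P hPker hPsub (hPmap.trans le_sup_left)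
  have hΔ : stanleyReisnerIdeal F Γ₁ ⊓ stanleyReisnerIdeal F Γ₂ ≤ stanleyReisnerIdeal F Δ := by
    rw [← stanleyReisnerIdeal_union h₁.1 h₂.1, hΔ]
    exact stanleyReisnerIdeal_anti (Set.union_subset_union Set.sdiff_subset Set.sdiff_subset)
  have hdeg : ∀ Γ, p ∈ stanleyReisnerIdeal F Γ ⊔ K → p ∈ stanleyReisnerIdeal F Γ ⊔ K * 𝔪 := by
    have hK : K = Ideal.span (Set.range θ ∪ {ω}) := (Ideal.span_union _ _).symm
    intro Γ h
    rw [hK] at h ⊢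
    exact (stanleyReisnerIdeal_isHomogeneous Γ).mem_sup_span_mul_of_mem_sup (n := 1) _
      (Set.union_subset (Set.range_subset_iff.mpr hlsopΔ.1) (Set.singleton_subset_iff.mpr hω))
      (fun _ => mem_span_X_of_mem_homogeneousSubmodule_one) hp h
  have hmem : p ∈ stanleyReisnerIdeal F Γ₁ ⊓ stanleyReisnerIdeal F Γ₂ ⊔ K :=
    Ideal.sup_inf_sup_le_of_inf_le_mul Ideal.mul_le_left hσ
      (Submodule.mem_inf.mpr ⟨hdeg Γ₁ (hvan₁ p hp), hdeg Γ₂ (hvan₂ p hp)⟩)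
  exact sup_le_sup_right hΔ K hmem

/-- Babson–Nevo: for a connected sum `Δ = Γ₁ #_σ Γ₂` of simplicial
2-spheres, a common l.s.o.p. `Θ` for `F[Δ]` and `F[⟨σ⟩]` and a linear form `ω`: if
the degree-2 components of `F[Γᵢ]/(Θ,ω)` vanish for `i = 1, 2`, then the degree-2
component of `F[Δ]/(Θ,ω)` vanishes. -/
theorem stmt19 {V F : Type*} [Fintype V] [DecidableEq V] [Field F]
    (Γ₁ Γ₂ : Set (Finset V))
    (h₁ : IsSimplicial2Sphere Γ₁) (h₂ : IsSimplicial2Sphere Γ₂)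
    (σ : Finset V) (hσ : σ.card = 3)
    (hint : Γ₁ ∩ Γ₂ = {τ | τ ⊆ σ})
    (Δ : Set (Finset V)) (hΔ : Δ = (Γ₁ \ {σ}) ∪ (Γ₂ \ {σ}))
    (θ : Fin 3 → MvPolynomial V F)
    (hlsopΔ : IsLSOP F Δ θ) (hlsopσ : IsLSOP F {τ : Finset V | τ ⊆ σ} θ)
    (ω : MvPolynomial V F) (hω : ω ∈ homogeneousSubmodule V F 1)
    (hvan₁ : ∀ p ∈ homogeneousSubmodule V F 2,
      p ∈ stanleyReisnerIdeal F Γ₁ ⊔ (Ideal.span (Set.range θ) ⊔ Ideal.span {ω}))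
    (hvan₂ : ∀ p ∈ homogeneousSubmodule V F 2,
      p ∈ stanleyReisnerIdeal F Γ₂ ⊔ (Ideal.span (Set.range θ) ⊔ Ideal.span {ω})) :
    ∀ p ∈ homogeneousSubmodule V F 2,
      p ∈ stanleyReisnerIdeal F Δ ⊔ (Ideal.span (Set.range θ) ⊔ Ideal.span {ω}) :=
  stmt19_general Γ₁ Γ₂ h₁ h₂ σ hint Δ hΔ θ hlsopΔ hlsopσ ω hω hvan₁ hvan₂
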